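/- arXiv:1312.4646 — 3 statements merged into one kernel-verified Lean document; each statement's English description precedes it below -/
import Mathlib

section
/- Let G act on a compact metrizable space X preserving the measure class of a Borel probability measure μ, such that μ × μ is ergodic for the diagonal G-action on X × X, X has no isolated points, and nonempty open subsets of X have positive μ-measure. If φ ∈ C(X) satisfies ∑_{g∈G} ∬ |φ(gx) − φ(gy)|² dμ(x)dμ(y) < ∞, then φ is constant. -/
/-! Put ψ(x, y) = ‖φ x - φ y‖². Summability of `∑_g ∫ ψ ∘ g` makes `∑_g ψ (g • p)` finite for
a.e. `p ∈ X × X`, so the orbit of such a `p` visits each set `{ψ > δ}`, `δ > 0`, only finitely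
often. On the other hand, ergodicity and full support make almost every orbit dense in `X × X`,
and a dense set in a T₁ space without isolated points meets every nonempty open set infinitely
often. So every `{ψ > δ}` is empty, i.e. `φ` is constant. -/

open MeasureTheory Filter Topology

theorem ae_summable_of_summable_integral {α ι : Type*} [MeasurableSpace α] {μ : Measure α}
    [Countable ι] {f : ι → α → ℝ} (hf_nonneg : ∀ i x, 0 ≤ f i x)
    (hf_int : ∀ i, Integrable (f i) μ) (hsum : Summable fun i => ∫ x, f i x ∂μ) :
    ∀ᵐ x ∂μ, Summable fun i => f i x := by
  have hmeas : ∀ i, AEMeasurable (fun x => ENNReal.ofReal (f i x)) μ := fun i =>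
    (hf_int i).aemeasurable.ennreal_ofReal
  have hlint : ∫⁻ x, ∑' i, ENNReal.ofReal (f i x) ∂μ ≠ ⊤ := by
    have hterm : ∀ i, ∫⁻ x, ENNReal.ofReal (f i x) ∂μ = ENNReal.ofReal (∫ x, f i x ∂μ) :=
      fun i => (ofReal_integral_eq_lintegral_ofReal (hf_int i) (ae_of_all _ (hf_nonneg i))).symm
    rw [lintegral_tsum hmeas, tsum_congr hterm,
      ← ENNReal.ofReal_tsum_of_nonneg (fun i => integral_nonneg (hf_nonneg i)) hsum]
    exact ENNReal.ofReal_ne_top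
  filter_upwards [ae_lt_top' (AEMeasurable.tsum hmeas) hlint] with x hx
  simpa only [ENNReal.toReal_ofReal (hf_nonneg _ x)] using ENNReal.summable_toReal hx.ne

/-- Unlike `ErgodicSMul`, this does not ask `ν` to be invariant. -/
def IsErgodicAction (G : Type*) {Y : Type*} [SMul G Y] [MeasurableSpace Y] (ν : Measure Y) :
    Prop :=
  ∀ S : Set Y, MeasurableSet S → (∀ g : G, (g • ·) ⁻¹' S = S) → ν S = 0 ∨ ν S = ν Set.univ

section

variable {G Y : Type*} [Group G] [MulAction G Y] [TopologicalSpace Y] [MeasurableSpace Y]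
  [OpensMeasurableSpace Y] [ContinuousConstSMul G Y] (ν : Measure Y) [IsFiniteMeasure ν]
  [ν.IsOpenPosMeasure]

theorem ae_orbit_inter_nonempty_of_ergodic (hergo : IsErgodicAction G ν)
    {O : Set Y} (hO : IsOpen O) (hne : O.Nonempty) :
    ∀ᵐ y ∂ν, (O ∩ MulAction.orbit G y).Nonempty := by
  set S := ⋃ g : G, (g • ·) ⁻¹' O
  have hS : IsOpen S := isOpen_iUnion fun g => hO.preimage (continuous_const_smul g)
  have hS_inv : ∀ h : G, (h • ·) ⁻¹' S = S := by
    intro h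
    ext y
    simp only [S, Set.mem_preimage, Set.mem_iUnion, ← mul_smul]
    exact ((mul_right_surjective h).exists (p := fun g : G => g • y ∈ O)).symm
  have hS_pos : ν S ≠ 0 :=
    (hO.measure_pos ν hne).ne' ∘ measure_mono_null fun y hy => Set.mem_iUnion.2 ⟨1, by simpa⟩
  have hS_full : ν Sᶜ = 0 := by
    rw [measure_compl hS.measurableSet (measure_ne_top ν S),
      (hergo S hS.measurableSet hS_inv).resolve_left hS_pos, tsub_self]
  filter_upwards [measure_eq_zero_iff_ae_notMem.1 hS_full] with y hy
  obtain ⟨g, hg⟩ := Set.mem_iUnion.1 (not_not.1 hy)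
  exact ⟨g • y, hg, MulAction.mem_orbit y g⟩

theorem ae_dense_orbit_of_ergodic [SecondCountableTopology Y] (hergo : IsErgodicAction G ν) :
    ∀ᵐ y ∂ν, Dense (MulAction.orbit G y) := by
  have hB := TopologicalSpace.isBasis_countableBasis Y
  simp_rw [hB.dense_iff]
  rw [ae_ball_iff (TopologicalSpace.countable_countableBasis Y)]
  intro O hO
  by_cases hne : O.Nonempty
  · filter_upwards [ae_orbit_inter_nonempty_of_ergodic ν hergo (hB.isOpen hO) hne] with y hy
    exact fun _ => hy
  · exact ae_of_all _ fun y h => absurd h hne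

end

theorem Dense.infinite_inter_of_isOpen {Y : Type*} [TopologicalSpace Y] [T1Space Y]
    [PerfectSpace Y] {s U : Set Y} (hs : Dense s) (hU : IsOpen U) (hne : U.Nonempty) :
    (s ∩ U).Infinite := fun hfin =>
  let ⟨_, hyU, hys, hy⟩ := (hs.sdiff_finite hfin).inter_open_nonempty U hU hne
  hy ⟨hys, hyU⟩

theorem MulAction.infinite_setOf_smul_mem_of_dense_orbit {G Y : Type*} [Group G] [MulAction G Y]
    [TopologicalSpace Y] [T1Space Y] [PerfectSpace Y] {y : Y} (hy : Dense (orbit G y))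
    {U : Set Y} (hU : IsOpen U) (hne : U.Nonempty) : {g : G | g • y ∈ U}.Infinite := by
  refine fun hfin => (hy.infinite_inter_of_isOpen hU hne) ((hfin.image (· • y)).subset ?_)
  rintro _ ⟨⟨g, rfl⟩, hgU⟩
  exact ⟨g, hgU, rfl⟩

theorem perfectSpace_of_forall_not_isOpen_singleton {X : Type*} [TopologicalSpace X]
    (h : ∀ x : X, ¬IsOpen ({x} : Set X)) : PerfectSpace X :=
  perfectSpace_iff_forall_not_isolated.2 fun x =>
    neBot_iff.2 fun hx => h x (isOpen_singleton_iff_punctured_nhds x |>.2 hx)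

instance PerfectSpace.prod_left {X Y : Type*} [TopologicalSpace X] [TopologicalSpace Y]
    [PerfectSpace X] : PerfectSpace (X × Y) :=
  perfectSpace_of_forall_not_isOpen_singleton fun p hp =>
    not_isOpen_singleton p.1 (by simpa using isOpenMap_fst _ hp)

/-- Double ergodicity obstruction: if the diagonal action of `G` on `(X×X, μ×μ)` is
ergodic, `X` has no isolated points, `μ` is fully supported, and `φ ∈ C(X)` has
square-summable `G`-deviation (in the double-integral form), then `φ` is constant. -/
theorem double_ergodicity_forces_constant
    {X : Type*} [TopologicalSpace X] [CompactSpace X]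
    [TopologicalSpace.MetrizableSpace X] [MeasurableSpace X] [BorelSpace X]
    {G : Type*} [Group G] [Countable G] [MulAction G X]
    (hcont : ∀ g : G, Continuous fun x : X => g • x)
    (hnoiso : ∀ x : X, ¬ IsOpen ({x} : Set X))
    (μ : Measure X) [IsProbabilityMeasure μ]
    (hfull : ∀ U : Set X, IsOpen U → U.Nonempty → 0 < μ U)
    (hergo : ∀ S : Set (X × X), MeasurableSet S →
      (∀ g : G, (fun p : X × X => (g • p.1, g • p.2)) ⁻¹' S = S) →
      (μ.prod μ) S = 0 ∨ (μ.prod μ) S = (μ.prod μ) Set.univ)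
    (φ : C(X, ℂ))
    (hsum : Summable fun g : G =>
      ∫ x, ∫ y, ‖φ (g • x) - φ (g • y)‖ ^ 2 ∂μ ∂μ) :
    ∀ x y : X, φ x = φ y := by
  have : PerfectSpace X := perfectSpace_of_forall_not_isOpen_singleton hnoiso
  have : ContinuousConstSMul G X := ⟨hcont⟩
  have : μ.IsOpenPosMeasure := ⟨fun U hU hne => (hfull U hU hne).ne'⟩
  set ψ : X × X → ℝ := fun p => ‖φ p.1 - φ p.2‖ ^ 2
  have hψ : Continuous ψ := by fun_prop
  have hψ_int : ∀ g : G, Integrable (fun p => ψ (g • p)) (μ.prod μ) := fun g =>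
    (hψ.comp (continuous_const_smul g)).integrable_of_hasCompactSupport
      (HasCompactSupport.of_compactSpace _)
  have hsum_prod : Summable fun g : G => ∫ p, ψ (g • p) ∂μ.prod μ :=
    hsum.congr fun g => (integral_prod _ (hψ_int g)).symm
  obtain ⟨p, hp_sum, hp_dense⟩ :=
    ((ae_summable_of_summable_integral (fun _ _ => sq_nonneg _) hψ_int hsum_prod).and
      (ae_dense_orbit_of_ergodic (G := G) (μ.prod μ) hergo)).exists
  by_contra! ⟨x, y, hxy⟩
  have hxy_pos : 0 < ψ (x, y) := pow_pos (norm_pos_iff.2 (sub_ne_zero.2 hxy)) 2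
  set δ := ψ (x, y) / 2
  have hδ : 0 < δ := half_pos hxy_pos
  have hfin : {g : G | ¬ψ (g • p) < δ}.Finite :=
    eventually_cofinite.1 (hp_sum.tendsto_cofinite_zero.eventually (gt_mem_nhds hδ))
  have hinf : {g : G | g • p ∈ {q | δ < ψ q}}.Infinite :=
    MulAction.infinite_setOf_smul_mem_of_dense_orbit hp_dense (isOpen_lt continuous_const hψ)
      ⟨(x, y), half_lt_self hxy_pos⟩
  exact hinf (hfin.subset fun g hg => not_lt.2 hg.le)
end

section
/- Let Z be a compact topological space of covering dimension d that contains a subspace S homeomorphic to the d-sphere S^d. Then Z admits a continuous self-map without fixed points. -/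
/-- Covering dimension at most `n`: every open cover admits an open refinement
of order at most `n + 1`. -/
def CoveringDimLE (Z : Type*) [TopologicalSpace Z] (n : ℕ) : Prop :=
  ∀ (ι : Type) (U : ι → Set Z), (∀ i, IsOpen (U i)) → (⋃ i, U i) = Set.univ →
    ∃ (κ : Type) (V : κ → Set Z), (∀ j, IsOpen (V j)) ∧ (⋃ j, V j) = Set.univ ∧
      (∀ j, ∃ i, V j ⊆ U i) ∧
      ∀ z : Z, {j | z ∈ V j}.Finite ∧ Nat.card {j | z ∈ V j} ≤ n + 1

/-!
Extend the homeomorphism `e : S ≃ₜ Sᵈ` to a map `g : Z → Sᵈ`; then `z ↦ e⁻¹ (-g z)` has no fixed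
point, since a fixed point lies in `S` and satisfies `e z = -e z`.

The extension exists because `Z` has dimension `≤ d`. A Tietze extension `F : Z → ℝᵈ⁺¹` of `e` is
approximated by `G = ∑ ρⱼ cⱼ`, where `ρ` is a partition of unity subordinate to a finite cover of
order `≤ d + 1` on whose members `F` varies little, and the vertices `cⱼ` are chosen near the values
of `F` so that any `d + 1` of them are linearly independent. At each point at most `d + 1` of the
`ρⱼ` are nonzero, so `G` never vanishes. Interpolating between `F` near `S` and `G` where `F` is
small gives a nonvanishing map equal to `F` on `S`, which is then normalised.
-/

open Metric Module Set

section GeneralPosition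

variable {E : Type*} [NormedAddCommGroup E] [NormedSpace ℝ E]

theorem Submodule.dense_compl_of_ne_top {W : Submodule ℝ E} (hW : W ≠ ⊤) : Dense (W : Set E)ᶜ := by
  rw [← interior_eq_empty_iff_dense_compl, ← not_nonempty_iff_eq_empty]
  exact fun h => hW (W.eq_top_of_nonempty_interior' h)

variable [FiniteDimensional ℝ E]

theorem exists_linearIndepOn_near {ι : Type*} (p : ι → E) (s : Finset ι) {ε : ℝ} (hε : 0 < ε) :
    ∃ c : ι → E, (∀ i, dist (c i) (p i) < ε) ∧
      ∀ t ⊆ s, t.card ≤ finrank ℝ E → LinearIndepOn ℝ c t := by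
  classical
  induction s using Finset.induction_on with
  | empty =>
    refine ⟨p, fun i => by simpa using hε, fun t ht _ => ?_⟩
    rw [Finset.subset_empty.1 ht, Finset.coe_empty]
    exact linearIndepOn_empty ℝ p
  | insert a s ha ih =>
    obtain ⟨c, hcp, hc⟩ := ih
    obtain ⟨x, hxp, hx⟩ : ∃ x ∈ ball (p a) ε,
        ∀ u ⊆ s, u.card < finrank ℝ E → x ∉ Submodule.span ℝ (c '' u) := by
      let U : Set (Finset ι) := {u | u ⊆ s ∧ u.card < finrank ℝ E}
      have hU : U.Countable :=
        (s.powerset.finite_toSet.subset fun u hu => Finset.mem_powerset.2 hu.1).countable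
      have hdense : Dense (⋂ u ∈ U, (Submodule.span ℝ (c '' u) : Set E)ᶜ) := by
        refine dense_biInter_of_isOpen (fun u _ => ?_) hU (fun u hu => ?_)
        · exact (Submodule.closed_of_finiteDimensional _).isOpen_compl
        · refine Submodule.dense_compl_of_ne_top fun htop => (hu.2.trans_le' ?_).false
          calc finrank ℝ E = finrank ℝ (Submodule.span ℝ (c '' u)) := by rw [htop, finrank_top]
            _ ≤ u.card := by
              rw [← Finset.coe_image]
              exact (finrank_span_finset_le_card _).trans Finset.card_image_le
      obtain ⟨x, hx, hxU⟩ := hdense.inter_open_nonempty _ isOpen_ball ⟨p a, mem_ball_self hε⟩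
      exact ⟨x, hx, fun u hus hu => mem_iInter₂.1 hxU u ⟨hus, hu⟩⟩
    refine ⟨Function.update c a x, fun i => ?_, fun t ht htcard => ?_⟩
    · rcases eq_or_ne i a with rfl | hi
      · simpa using hxp
      · simpa [hi] using hcp i
    have hts : t.erase a ⊆ s := Finset.subset_insert_iff.1 ht
    have hcu : LinearIndepOn ℝ (Function.update c a x) (t.erase a) :=
      (hc _ hts (Finset.card_erase_le.trans htcard)).congr fun i hi => by
        simp [Finset.ne_of_mem_erase hi]
    by_cases hat : a ∈ t
    · rw [← Finset.insert_erase hat, Finset.coe_insert, linearIndepOn_insert (by simp)]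
      refine ⟨hcu, ?_⟩
      rw [Function.update_self,
        Set.image_congr fun i hi => Function.update_of_ne (Finset.ne_of_mem_erase hi) _ _]
      refine hx _ hts ?_
      have := Finset.card_pos.2 ⟨a, hat⟩
      rw [Finset.card_erase_of_mem hat]
      omega
    · rwa [Finset.erase_eq_of_notMem hat] at hcu

theorem LinearIndepOn.sum_smul_ne_zero {R M ι : Type*} [Ring R] [AddCommGroup M] [Module R M]
    {v : ι → M} {s : Finset ι} (hv : LinearIndepOn R v s) {w : ι → R}
    (hw : ∑ i ∈ s, w i ≠ 0) : ∑ i ∈ s, w i • v i ≠ 0 :=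
  fun h => hw (Finset.sum_eq_zero (linearIndepOn_finset_iff.1 hv w h))

end GeneralPosition

namespace CoveringDimLE

theorem exists_finite_refinement {Z : Type*} [TopologicalSpace Z] [CompactSpace Z] {d : ℕ}
    (hZ : CoveringDimLE Z d) {ι : Type}
    (U : ι → Set Z) (hUo : ∀ i, IsOpen (U i)) (hU : ⋃ i, U i = univ) :
    ∃ (κ : Type) (_ : Fintype κ) (V : κ → Set Z) (a : κ → ι), (∀ j, IsOpen (V j)) ∧
      (⋃ j, V j) = univ ∧ (∀ j, V j ⊆ U (a j)) ∧ ∀ z, {j | z ∈ V j}.ncard ≤ d + 1 := by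
  obtain ⟨κ, V, hVo, hV, hVU, hVord⟩ := hZ ι U hUo hU
  choose a ha using hVU
  obtain ⟨t, ht⟩ := isCompact_univ.elim_finite_subcover V hVo hV.ge
  refine ⟨t, inferInstance, fun j => V j, fun j => a j, fun j => hVo j, ?_, fun j => ha j,
    fun z => ?_⟩
  · simpa [eq_univ_iff_forall] using ht
  · simp only [Nat.card_coe_set_eq] at hVord
    exact (Set.ncard_le_ncard_of_injOn Subtype.val (fun j hj => hj) Subtype.val_injective.injOn
      (hVord z).1).trans (hVord z).2

variable {Z : Type} [TopologicalSpace Z] [CompactSpace Z] [T2Space Z] {d : ℕ}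
  {E : Type*} [NormedAddCommGroup E] [NormedSpace ℝ E] [FiniteDimensional ℝ E]

theorem exists_ne_zero_approx (hZ : CoveringDimLE Z d) (hd : d < finrank ℝ E) {F : Z → E}
    (hF : Continuous F) {ε : ℝ} (hε : 0 < ε) :
    ∃ G : Z → E, Continuous G ∧ (∀ z, dist (G z) (F z) < ε) ∧ ∀ z, G z ≠ 0 := by
  classical
  obtain ⟨κ, _, V, a, hVo, hV, hVU, hVord⟩ := hZ.exists_finite_refinement
    (fun a => F ⁻¹' ball (F a) (ε / 3)) (fun a => isOpen_ball.preimage hF)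
    (eq_univ_of_forall fun z => mem_iUnion.2 ⟨z, mem_ball_self (by positivity)⟩)
  obtain ⟨c, hcF, hc⟩ :=
    exists_linearIndepOn_near (fun j => F (a j)) Finset.univ (ε := ε / 3) (by positivity)
  obtain ⟨ρ, hρ⟩ := PartitionOfUnity.exists_isSubordinate isClosed_univ V hVo hV.ge
  have hρV : ∀ j z, ρ j z ≠ 0 → z ∈ V j := fun j z h => hρ j (subset_tsupport _ h)
  refine ⟨fun z => ∑ᶠ j, ρ j z • c j, ρ.continuous_finsum_smul fun j _ _ => continuousAt_const,
    fun z => ?_, fun z => ?_⟩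
  · have hmem : ∑ᶠ j, ρ j z • c j ∈ closedBall (F z) (2 * ε / 3) := by
      refine ρ.finsum_smul_mem_convex (g := fun j _ => c j) (mem_univ z) (fun j hj => ?_)
        (convex_closedBall _ _)
      have hz : dist (F z) (F (a j)) < ε / 3 := hVU j (hρV j z hj)
      rw [mem_closedBall]
      linarith [dist_triangle_right (c j) (F z) (F (a j)), hcF j]
    exact (mem_closedBall.1 hmem).trans_lt (by linarith)
  · set T := Finset.univ.filter fun j => z ∈ V j
    have hsupp : (fun j => ρ j z).support ⊆ T := fun j hj => by simpa [T] using hρV j z hj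
    have hsum : ∑ᶠ j, ρ j z • c j = ∑ j ∈ T, ρ j z • c j :=
      finsum_eq_sum_of_support_subset _ fun j hj =>
        hsupp (Function.support_smul_subset_left _ _ hj)
    have hone : ∑ j ∈ T, ρ j z = 1 := by
      rw [← finsum_eq_sum_of_support_subset _ hsupp, ρ.sum_eq_one (mem_univ z)]
    have hT : T.card ≤ finrank ℝ E := by
      simpa [T, ← Set.ncard_coe_finset] using (hVord z).trans hd
    dsimp only
    rw [hsum]
    exact (hc T (Finset.subset_univ _) hT).sum_smul_ne_zero (by simp [hone])

theorem exists_ne_zero_eqOn (hZ : CoveringDimLE Z d) (hd : d < finrank ℝ E) {S : Set Z}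
    (hS : IsClosed S) {F : Z → E} (hF : Continuous F) (hFS : ∀ z ∈ S, 1 ≤ ‖F z‖) :
    ∃ H : Z → E, Continuous H ∧ (∀ z, H z ≠ 0) ∧ EqOn H F S := by
  obtain ⟨G, hG, hGF, hG0⟩ := hZ.exists_ne_zero_approx hd hF (ε := 1 / 2) (by norm_num)
  have hK : IsClosed {z | ‖F z‖ ≤ 1 / 2} := isClosed_le hF.norm continuous_const
  have hSK : Disjoint S {z | ‖F z‖ ≤ 1 / 2} :=
    disjoint_left.2 fun z hz hz' => by linarith [hFS z hz, show ‖F z‖ ≤ 1 / 2 from hz']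
  obtain ⟨u, hu0, hu1, hu01⟩ := exists_continuous_zero_one_of_isClosed hS hK hSK
  refine ⟨fun z => F z + u z • (G z - F z), by fun_prop, fun z => ?_,
    fun z hz => by simp [hu0 hz]⟩
  by_cases hz : ‖F z‖ ≤ 1 / 2
  · simpa [hu1 hz] using hG0 z
  · intro h0
    have hlt : ‖u z • (G z - F z)‖ < ‖F z‖ := calc
      ‖u z • (G z - F z)‖ = u z * dist (G z) (F z) := by
        rw [norm_smul, Real.norm_of_nonneg (hu01 z).1, dist_eq_norm]
      _ ≤ 1 * dist (G z) (F z) := by gcongr; exact (hu01 z).2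
      _ < ‖F z‖ := by linarith [hGF z, not_le.1 hz]
    rw [← neg_eq_of_add_eq_zero_right h0, norm_neg] at hlt
    exact hlt.false

theorem exists_sphere_extension (hZ : CoveringDimLE Z d) (hd : d < finrank ℝ E) {S : Set Z}
    (hS : IsClosed S) (φ : C(S, sphere (0 : E) 1)) : ∃ g : C(Z, sphere (0 : E) 1), ∀ z : S, g z = φ z := by
  obtain ⟨F, hF⟩ :=
    ((ContinuousMap.mk Subtype.val continuous_subtype_val).comp φ).exists_restrict_eq hS
  have hFS : ∀ z : S, F z = φ z := fun z => DFunLike.congr_fun hF z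
  obtain ⟨H, hH, hH0, hHF⟩ := hZ.exists_ne_zero_eqOn hd hS F.continuous fun z hz => by
    rw [hFS ⟨z, hz⟩, norm_eq_of_mem_sphere]
  have hHn : ∀ z, ‖H z‖ ≠ 0 := fun z => norm_ne_zero_iff.2 (hH0 z)
  refine ⟨⟨fun z => ⟨‖H z‖⁻¹ • H z, ?_⟩, ?_⟩, fun z => Subtype.ext ?_⟩
  · rw [mem_sphere_zero_iff_norm, norm_smul, norm_inv, norm_norm, inv_mul_cancel₀ (hHn z)]
  · exact (((hH.norm).inv₀ hHn).smul hH).subtype_mk _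
  · simp [hHF z.2, hFS z, norm_eq_of_mem_sphere]

end CoveringDimLE

theorem fixed_point_free_selfmap_of_sphere_general
    (Z : Type) [TopologicalSpace Z] [CompactSpace Z] [T2Space Z]
    (d : ℕ)
    (hdim : CoveringDimLE Z d)
    (S : Set Z)
    (hS : Nonempty (S ≃ₜ (Metric.sphere (0 : EuclideanSpace ℝ (Fin (d + 1))) 1))) :
    ∃ f : Z → Z, Continuous f ∧ ∀ z : Z, f z ≠ z := by
  obtain ⟨e⟩ := hS
  have : CompactSpace S := e.symm.compactSpace
  obtain ⟨g, hg⟩ := hdim.exists_sphere_extension (E := EuclideanSpace ℝ (Fin (d + 1)))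
    (by simp) (isCompact_iff_compactSpace.2 this).isClosed ⟨e, e.continuous⟩
  refine ⟨fun z => e.symm (-g z), by fun_prop, fun z hz => ?_⟩
  have hzS : z ∈ S := hz ▸ (e.symm (-g z)).2
  have he : e ⟨z, hzS⟩ = -g z := by
    rw [← e.apply_symm_apply (-g z)]
    exact congrArg e (Subtype.ext hz).symm
  rw [hg ⟨z, hzS⟩] at he
  exact ne_neg_of_mem_unit_sphere ℝ _ he

/-- A compact space of covering dimension `d` containing a topological `d`-sphere
admits a continuous self-map without fixed points. -/
theorem fixed_point_free_selfmap_of_sphere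
    (Z : Type) [TopologicalSpace Z] [CompactSpace Z] [T2Space Z]
    (d : ℕ)
    (hdim : CoveringDimLE Z d)
    (hdim' : ∀ m : ℕ, CoveringDimLE Z m → d ≤ m)
    (S : Set Z)
    (hS : Nonempty (S ≃ₜ (Metric.sphere (0 : EuclideanSpace ℝ (Fin (d + 1))) 1))) :
    ∃ f : Z → Z, Continuous f ∧ ∀ z : Z, f z ≠ z :=
  fixed_point_free_selfmap_of_sphere_general Z d hdim S hS
end

section
/- Let G be a countable group acting by homeomorphisms on a compact metrizable space X such that the action has the convergence property (for every sequence g_n → ∞ in G there is a subsequence g_{n_i} and points x⁺, x⁻ ∈ X with g_{n_i} z → x⁺ uniformly on compact subsets of X \ {x⁻}). Let μ be a Borel probability measure on X such that μ({x}) = 0 for every x ∈ X. Then every weak* accumulation point of the orbit {g_* μ : g ∈ G} along sequences g_n → ∞ is a Dirac point measure. -/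
open MeasureTheory Filter Topology BoundedContinuousFunction

/-! Along a subsequence of `g_n` given by the convergence property, `g_n x → x⁺` for every
`x ≠ x⁻`, hence for `μ`-almost every `x` since `μ {x⁻} = 0`. Dominated convergence then shows
that `(g_n)_* μ` converges weakly to `δ_{x⁺}` along that subsequence, so the accumulation
point is `δ_{x⁺}`. -/

theorem tendsto_integral_map_of_ae_tendsto {Ω X ι : Type*} [MeasurableSpace Ω]
    [TopologicalSpace X] [MeasurableSpace X] [OpensMeasurableSpace X]
    {l : Filter ι} [l.IsCountablyGenerated] {μ : Measure Ω} [IsProbabilityMeasure μ]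
    {T : ι → Ω → X} (hT : ∀ i, AEMeasurable (T i) μ) {p : X}
    (h : ∀ᵐ ω ∂μ, Tendsto (fun i => T i ω) l (𝓝 p)) (f : X →ᵇ ℝ) :
    Tendsto (fun i => ∫ x, f x ∂(μ.map (T i))) l (𝓝 (f p)) := by
  have hf_comp : ∀ i, AEStronglyMeasurable (fun ω => f (T i ω)) μ := fun i =>
    (f.continuous.measurable.comp_aemeasurable (hT i)).aestronglyMeasurable
  simp_rw [fun i => integral_map (hT i) f.continuous.aestronglyMeasurable]
  simpa using tendsto_integral_filter_of_dominated_convergence (fun _ => ‖f‖)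
    (Eventually.of_forall hf_comp)
    (Eventually.of_forall fun i => Eventually.of_forall fun ω => f.norm_coe_le_norm (T i ω))
    (integrable_const ‖f‖) (h.mono fun ω hω => (f.continuous.tendsto p).comp hω)

theorem eq_dirac_of_forall_integral_eq {X : Type*} [TopologicalSpace X] [MeasurableSpace X]
    [HasOuterApproxClosed X] [BorelSpace X] {ν : Measure X} [IsProbabilityMeasure ν] {x : X}
    (h : ∀ f : X →ᵇ ℝ, ∫ y, f y ∂ν = f x) : ν = Measure.dirac x :=
  ext_of_forall_integral_eq_of_IsFiniteMeasure fun f => by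
    rw [h, integral_dirac' _ _ f.continuous.stronglyMeasurable]

theorem convergence_action_accumulation_is_dirac_general
    {G : Type*} [Group G]
    {X : Type*} [MetricSpace X] [CompactSpace X]
    [MeasurableSpace X] [BorelSpace X]
    [MulAction G X] (hcont : ∀ g : G, Continuous fun x : X => g • x)
    (hconv : ∀ g : ℕ → G,
      (∀ F : Finset G, ∀ᶠ n in atTop, g n ∉ F) →
      ∃ φ : ℕ → ℕ, StrictMono φ ∧ ∃ xp xm : X,
        ∀ K : Set X, IsCompact K → K ⊆ {xm}ᶜ →
          TendstoUniformlyOn (fun n z => g (φ n) • z) (fun _ => xp) atTop K)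
    (μ : Measure X) [IsProbabilityMeasure μ]
    (hatomless : ∀ x : X, μ {x} = 0) :
    ∀ g : ℕ → G, (∀ F : Finset G, ∀ᶠ n in atTop, g n ∉ F) →
      ∀ (ν : Measure X), IsProbabilityMeasure ν →
      (∀ f : C(X, ℝ),
        Tendsto (fun n => ∫ x, f x ∂(Measure.map (fun x : X => g n • x) μ))
          atTop (nhds (∫ x, f x ∂ν))) →
      ∃ x : X, ν = Measure.dirac x := by
  intro g hg ν hν hlim
  obtain ⟨φ, hφ, xp, xm, huc⟩ := hconv g hg
  have hae : ∀ᵐ x ∂μ, Tendsto (fun n => g (φ n) • x) atTop (𝓝 xp) := by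
    filter_upwards [measure_eq_zero_iff_ae_notMem.1 (hatomless xm)] with x hx
    exact (huc {x} isCompact_singleton (by simpa [eq_comm] using hx)).tendsto_at rfl
  refine ⟨xp, eq_dirac_of_forall_integral_eq fun f => ?_⟩
  exact tendsto_nhds_unique ((hlim f.toContinuousMap).comp hφ.tendsto_atTop)
    (tendsto_integral_map_of_ae_tendsto (fun _ => (hcont _).aemeasurable) hae f)

/-- For a convergence action of a countable group `G` on a compact metrizable
space `X` and an atomless-on-points probability measure `μ`, every weak*
accumulation point of the pushforwards `g_*μ` along sequences `g_n → ∞` is a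
Dirac point measure. -/
theorem convergence_action_accumulation_is_dirac
    {G : Type*} [Group G] [Countable G]
    {X : Type*} [MetricSpace X] [CompactSpace X]
    [MeasurableSpace X] [BorelSpace X]
    [MulAction G X] (hcont : ∀ g : G, Continuous fun x : X => g • x)
    (hconv : ∀ g : ℕ → G,
      (∀ F : Finset G, ∀ᶠ n in atTop, g n ∉ F) →
      ∃ φ : ℕ → ℕ, StrictMono φ ∧ ∃ xp xm : X,
        ∀ K : Set X, IsCompact K → K ⊆ {xm}ᶜ →
          TendstoUniformlyOn (fun n z => g (φ n) • z) (fun _ => xp) atTop K)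
    (μ : Measure X) [IsProbabilityMeasure μ]
    (hatomless : ∀ x : X, μ {x} = 0) :
    ∀ g : ℕ → G, (∀ F : Finset G, ∀ᶠ n in atTop, g n ∉ F) →
      ∀ (ν : Measure X), IsProbabilityMeasure ν →
      (∀ f : C(X, ℝ),
        Tendsto (fun n => ∫ x, f x ∂(Measure.map (fun x : X => g n • x) μ))
          atTop (nhds (∫ x, f x ∂ν))) →
      ∃ x : X, ν = Measure.dirac x :=
  convergence_action_accumulation_is_dirac_general hcont hconv μ hatomless
end
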